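/- arXiv:1910.09776 — 4 statements merged into one kernel-verified Lean document; each statement's English description precedes it below -/
import Mathlib

section
/- Let a, b, c, d be real numbers with d ≠ 0, set A = a + b and k = 2A, and assume c ≠ k. Define S to be the set of pairs (r, z) with r > 0 and z > −1 such that both 3d·r² + 4z(1+z)²·(A + (A+c)z) = 0 and d·r² + 2c·z²(1+z)² = 0. If c·A ≠ 0, c/d < 0, and c lies outside the closed interval with endpoints 0 and k, then S consists of exactly one point, namely (r₀, z₀) with z₀ = k/(c − k) and r₀ = √(−8A²c³/((c−k)⁴·d)). In all other cases (i.e., if c·A = 0, or c/d ≥ 0, or c belongs to the closed interval with endpoints 0 and k), S is empty. -/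
/-!
Subtracting three times the second equation from the first leaves
`2 z (1 + z)² (2A + (2A - c) z) = 0`. The second equation with `r > 0` and `d ≠ 0` rules out
`z = 0` and `c = 0`, so `z = k / (c - k)`; then `1 + z = c / (c - k)` is positive exactly
when `c (c - k) > 0`, i.e. when `c` lies outside the interval between `0` and `k`.
Substituting `z` into the second equation determines `r²`, whose sign is that of `-c / d`.
-/

open Set

section OrderedField

variable {α : Type*} [Field α] [LinearOrder α] [IsStrictOrderedRing α]

theorem mem_uIcc_iff_sub_mul_sub_nonpos {a b c : α} :
    c ∈ uIcc a b ↔ (c - a) * (c - b) ≤ 0 := by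
  wlog hab : a ≤ b generalizing a b
  · rw [uIcc_comm, mul_comm]
    exact this (le_of_not_ge hab)
  rw [uIcc_of_le hab, mem_Icc]
  constructor
  · rintro ⟨hac, hcb⟩
    nlinarith
  · intro h
    constructor <;> by_contra! hlt <;> nlinarith

theorem neg_one_lt_div_sub_iff {c k : α} (hck : c - k ≠ 0) :
    -1 < k / (c - k) ↔ 0 < c * (c - k) := by
  rw [neg_lt_iff_pos_add, div_add_one hck, add_sub_cancel, div_pos_iff, mul_pos_iff]

end OrderedField

/-- The equations are the numerators of the two components of the averaged function `ḡ₀`. -/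
def IsAveragedRoot (A c d r z : ℝ) : Prop :=
  0 < r ∧ -1 < z ∧
    3 * d * r ^ 2 + 4 * z * (1 + z) ^ 2 * (A + (A + c) * z) = 0 ∧
    d * r ^ 2 + 2 * c * z ^ 2 * (1 + z) ^ 2 = 0

variable {A c d r z : ℝ}

theorem averaged_second_eq_iff (hck : c - 2 * A ≠ 0) (hd : d ≠ 0) :
    d * r ^ 2 + 2 * c * (2 * A / (c - 2 * A)) ^ 2 * (1 + 2 * A / (c - 2 * A)) ^ 2 = 0 ↔
      r ^ 2 = -8 * A ^ 2 * c ^ 3 / ((c - 2 * A) ^ 4 * d) := by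
  rw [eq_div_iff (by positivity)]
  field_simp
  constructor <;> intro h <;> linear_combination h

theorem averaged_radius_sq_pos_iff (hck : c - 2 * A ≠ 0) (hcA : c * A ≠ 0) :
    0 < -8 * A ^ 2 * c ^ 3 / ((c - 2 * A) ^ 4 * d) ↔ c / d < 0 := by
  have hcoeff : 0 < 8 * (A * c) ^ 2 / (c - 2 * A) ^ 4 := by
    rw [mul_comm] at hcA
    positivity
  have hfactor : -8 * A ^ 2 * c ^ 3 / ((c - 2 * A) ^ 4 * d) =
      8 * (A * c) ^ 2 / (c - 2 * A) ^ 4 * -(c / d) := by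
    simp only [div_eq_mul_inv, mul_inv]
    ring
  rw [hfactor, mul_pos_iff_of_pos_left hcoeff, neg_pos]

theorem IsAveragedRoot.eq_div (hd : d ≠ 0) (h : IsAveragedRoot A c d r z) :
    c * A ≠ 0 ∧ c - 2 * A ≠ 0 ∧ z = 2 * A / (c - 2 * A) := by
  obtain ⟨hr, hz, h₁, h₂⟩ := h
  have hz₁ : 1 + z ≠ 0 := by linarith
  have hcz : c * z ≠ 0 := by
    intro hcz
    exact mul_ne_zero hd (pow_pos hr 2).ne'
      (by linear_combination h₂ - 2 * z * (1 + z) ^ 2 * hcz)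
  have hlin : 2 * A + (2 * A - c) * z = 0 := by
    have : 2 * z * (1 + z) ^ 2 * (2 * A + (2 * A - c) * z) = 0 := by
      linear_combination h₁ - 3 * h₂
    simpa [hz₁, right_ne_zero_of_mul hcz] using this
  have hA : A ≠ 0 := by
    rintro rfl
    exact hcz (by linear_combination -hlin)
  have hck : c - 2 * A ≠ 0 := by
    intro hck
    exact hA (by linear_combination hlin / 2 + z * hck / 2)
  exact ⟨mul_ne_zero (left_ne_zero_of_mul hcz) hA, hck,
    eq_div_of_mul_eq hck (by linear_combination -hlin)⟩

theorem isAveragedRoot_iff (hd : d ≠ 0) :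
    IsAveragedRoot A c d r z ↔
      (c * A ≠ 0 ∧ c / d < 0 ∧ c ∉ uIcc 0 (2 * A)) ∧
        r = √(-8 * A ^ 2 * c ^ 3 / ((c - 2 * A) ^ 4 * d)) ∧ z = 2 * A / (c - 2 * A) := by
  constructor
  · intro h
    obtain ⟨hcA, hck, rfl⟩ := h.eq_div hd
    obtain ⟨hr, hz, -, h₂⟩ := h
    have hr₂ := (averaged_second_eq_iff hck hd).1 h₂
    have hcd := (averaged_radius_sq_pos_iff hck hcA).1 (hr₂ ▸ pow_pos hr 2)
    refine ⟨⟨hcA, hcd, ?_⟩, by rw [← hr₂, Real.sqrt_sq hr.le], rfl⟩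
    rw [mem_uIcc_iff_sub_mul_sub_nonpos, sub_zero, not_le]
    exact (neg_one_lt_div_sub_iff hck).1 hz
  · rintro ⟨⟨hcA, hcd, hI⟩, rfl, rfl⟩
    have hck : c - 2 * A ≠ 0 := sub_ne_zero.2 fun h ↦ hI (h ▸ right_mem_uIcc)
    have hR := (averaged_radius_sq_pos_iff hck hcA).2 hcd
    have h₂ := (averaged_second_eq_iff hck hd).2 (Real.sq_sqrt hR.le)
    refine ⟨Real.sqrt_pos.2 hR, (neg_one_lt_div_sub_iff hck).2 ?_, ?_, h₂⟩
    · rwa [mem_uIcc_iff_sub_mul_sub_nonpos, sub_zero, not_le] at hI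
    · have hlin : 2 * A + (2 * A - c) * (2 * A / (c - 2 * A)) = 0 := by
        field_simp
        ring
      set z := 2 * A / (c - 2 * A)
      linear_combination 3 * h₂ + 2 * z * (1 + z) ^ 2 * hlin

theorem averaged_function_roots_general
    (c d A k : ℝ) (hd : d ≠ 0) (hk : k = 2 * A)
    (S : Set (ℝ × ℝ))
    (hS : S = {p : ℝ × ℝ | 0 < p.1 ∧ -1 < p.2 ∧
      3 * d * p.1 ^ 2 + 4 * p.2 * (1 + p.2) ^ 2 * (A + (A + c) * p.2) = 0 ∧
      d * p.1 ^ 2 + 2 * c * p.2 ^ 2 * (1 + p.2) ^ 2 = 0}) :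
    ((c * A ≠ 0 ∧ c / d < 0 ∧ c ∉ Set.uIcc 0 k) →
      S = {(Real.sqrt (-8 * A ^ 2 * c ^ 3 / ((c - k) ^ 4 * d)), k / (c - k))}) ∧
    (¬ (c * A ≠ 0 ∧ c / d < 0 ∧ c ∉ Set.uIcc 0 k) → S = ∅) := by
  subst hk hS
  refine ⟨fun h ↦ ?_, fun h ↦ ?_⟩ <;> ext ⟨r, z⟩ <;> refine (isAveragedRoot_iff hd).trans ?_
  · simp [h]
  · exact iff_of_false (fun hm ↦ h hm.1) (notMem_empty _)

/-- Root analysis of the first-order averaged function in Proposition 1.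
With `A = a + b`, `k = 2A`, `d ≠ 0`, `c ≠ k`, the set `S` of pairs `(r, z)` with
`r > 0`, `z > -1` annihilating both numerators of the averaged function is a single
explicit point under the stated parameter restrictions, and empty otherwise. -/
theorem averaged_function_roots
    (a b c d A k : ℝ) (hd : d ≠ 0) (hA : A = a + b) (hk : k = 2 * A) (hck : c ≠ k)
    (S : Set (ℝ × ℝ))
    (hS : S = {p : ℝ × ℝ | 0 < p.1 ∧ -1 < p.2 ∧
      3 * d * p.1 ^ 2 + 4 * p.2 * (1 + p.2) ^ 2 * (A + (A + c) * p.2) = 0 ∧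
      d * p.1 ^ 2 + 2 * c * p.2 ^ 2 * (1 + p.2) ^ 2 = 0}) :
    ((c * A ≠ 0 ∧ c / d < 0 ∧ c ∉ Set.uIcc 0 k) →
      S = {(Real.sqrt (-8 * A ^ 2 * c ^ 3 / ((c - k) ^ 4 * d)), k / (c - k))}) ∧
    (¬ (c * A ≠ 0 ∧ c / d < 0 ∧ c ∉ Set.uIcc 0 k) → S = ∅) :=
  averaged_function_roots_general c d A k hd hk S hS
end

section
/- Let b, c be real numbers with b·c ≠ 0. Define, for r > 0 and z > −1, the map ρ̄(r, z) = ( r·P(r², z) / (8(1+z)⁶), −z·Q(r², z) / (2(1+z)⁵) ), where P(u, z) = −b·c·u·(1+z)²·(2z − 1) and Q(u, z) = b·c·u·(1+z)². Then ρ̄ has no zero in the region {(r, z) : r > 0, z > −1}; that is, there is no pair (r, z) with r > 0 and z > −1 for which both components of ρ̄ vanish. -/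
section AveragedFunction

variable {K : Type*} [Field K] [CharZero K] {b c r z : K}

theorem averaged_fst_eq_zero_iff (hbc : b * c ≠ 0) (hr : r ≠ 0) (hz : 1 + z ≠ 0) :
    r * (-b * c * r ^ 2 * (1 + z) ^ 2 * (2 * z - 1)) / (8 * (1 + z) ^ 6) = 0 ↔ 2 * z = 1 := by
  have hb : b ≠ 0 := left_ne_zero_of_mul hbc
  have hc : c ≠ 0 := right_ne_zero_of_mul hbc
  simp [hb, hc, hr, hz, sub_eq_zero]

theorem averaged_snd_eq_zero_iff (hbc : b * c ≠ 0) (hr : r ≠ 0) (hz : 1 + z ≠ 0) :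
    -z * (b * c * r ^ 2 * (1 + z) ^ 2) / (2 * (1 + z) ^ 5) = 0 ↔ z = 0 := by
  have hb : b ≠ 0 := left_ne_zero_of_mul hbc
  have hc : c ≠ 0 := right_ne_zero_of_mul hbc
  simp [hb, hc, hr, hz]

end AveragedFunction

/-- Statement (iii) of Proposition 1: the second-order averaged function
`ρ̄(r,z) = (r P(r²,z)/(8(1+z)⁶), -z Q(r²,z)/(2(1+z)⁵))` with
`P(u,z) = -bcu(1+z)²(2z-1)` and `Q(u,z) = bcu(1+z)²` has no zero with
`r > 0` and `z > -1`, provided `bc ≠ 0`. -/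
theorem second_order_averaged_no_zero
    (b c : ℝ) (hbc : b * c ≠ 0)
    (P Q : ℝ → ℝ → ℝ)
    (hP : ∀ u z, P u z = -b * c * u * (1 + z) ^ 2 * (2 * z - 1))
    (hQ : ∀ u z, Q u z = b * c * u * (1 + z) ^ 2) :
    ¬ ∃ r z : ℝ, 0 < r ∧ -1 < z ∧
      r * P (r ^ 2) z / (8 * (1 + z) ^ 6) = 0 ∧
      -z * Q (r ^ 2) z / (2 * (1 + z) ^ 5) = 0 := by
  rintro ⟨r, z, hr, hz, hfst, hsnd⟩
  have hz' : 1 + z ≠ 0 := by linarith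
  rw [hP, averaged_fst_eq_zero_iff hbc hr.ne' hz'] at hfst
  rw [hQ, averaged_snd_eq_zero_iff hbc hr.ne' hz'] at hsnd
  linarith
end

section
/- Let α₁, β₁, γ₁, α₂, β₂, γ₂ be real numbers with α₁ ≠ 0 and (α₁γ₂ − γ₁β₂, β₁β₂ + γ₁α₂, β₁α₂) ≠ (0, 0, 0). Then the set of pairs (r, w) ∈ ℝ² with r > 0 satisfying simultaneously r·(α₁r² + β₁w + γ₁w²) = 0 and α₂r² + β₂r²w + γ₂w³ = 0 has at most two elements. -/
/-!
On the zero set with `r > 0` the first equation reads `α₁ r² = -(β₁ w + γ₁ w²)`, so `r` is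
determined by `w`, and `w ≠ 0`. Eliminating `r²` from the second equation leaves
`w · q(w) = 0` for a quadratic `q` whose coefficients are not all zero, so at most two values
of `w`, hence at most two zeros, occur.
-/

open Polynomial

theorem Set.encard_setOf_quadratic_eq_zero_le_two {K : Type*} [CommRing K] [IsDomain K]
    {a b c : K} (habc : (a, b, c) ≠ (0, 0, 0)) :
    {x : K | a * x ^ 2 + b * x + c = 0}.encard ≤ 2 := by
  set p : K[X] := C a * X ^ 2 + C b * X + C c
  have hp : p ≠ 0 := by
    contrapose! habc
    have h2 : p.coeff 2 = a := by simp [p]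
    have h1 : p.coeff 1 = b := by simp [p]
    have h0 : p.coeff 0 = c := by simp [p]
    simp only [habc, coeff_zero] at h0 h1 h2
    rw [← h0, ← h1, ← h2]
  have hsub : {x : K | a * x ^ 2 + b * x + c = 0} ⊆ p.rootSet K := fun x hx => by
    simpa [mem_rootSet, hp, p] using hx
  calc {x : K | a * x ^ 2 + b * x + c = 0}.encard
      ≤ (p.rootSet K).encard := Set.encard_le_encard hsub
    _ = (p.rootSet K).ncard := ((p.rootSet_finite K).cast_ncard_eq).symm
    _ ≤ 2 := by
      have : p.natDegree ≤ 2 := by simp only [p]; compute_degree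
      exact_mod_cast (p.ncard_rootSet_le K).trans this

theorem injOn_snd_of_mul_sq_eq {K L : Type*} [Field K] [LinearOrder K] [IsStrictOrderedRing K]
    {α : K} (hα : α ≠ 0) (f : L → K) :
    Set.InjOn Prod.snd {p : K × L | 0 < p.1 ∧ α * p.1 ^ 2 = f p.2} := by
  rintro ⟨r, w⟩ ⟨hr, hrw⟩ ⟨r', w'⟩ ⟨hr', hrw'⟩ (rfl : w = w')
  have hsq : r ^ 2 = r' ^ 2 := mul_left_cancel₀ hα (hrw.trans hrw'.symm)
  exact congrArg (·, w) ((pow_left_inj₀ hr.le hr'.le two_ne_zero).1 hsq)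

theorem mul_quadratic_eq_zero_of_bifurcation_eq_zero {α₁ β₁ γ₁ α₂ β₂ γ₂ r w : ℝ}
    (h₁ : α₁ * r ^ 2 + β₁ * w + γ₁ * w ^ 2 = 0)
    (h₂ : α₂ * r ^ 2 + β₂ * r ^ 2 * w + γ₂ * w ^ 3 = 0) :
    w * ((α₁ * γ₂ - γ₁ * β₂) * w ^ 2 + -(β₁ * β₂ + γ₁ * α₂) * w + -(β₁ * α₂)) = 0 := by
  linear_combination α₁ * h₂ - (α₂ + β₂ * w) * h₁

/-- Counting argument in Proposition 2 (ii): for the cubic reduced bifurcation map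
`G†(r,w) = (r(α₁r² + β₁w + γ₁w²), α₂r² + β₂r²w + γ₂w³)` with `α₁ ≠ 0` and
`(α₁γ₂ - γ₁β₂, β₁β₂ + γ₁α₂, β₁α₂) ≠ (0,0,0)`, there are at most two zeros with `r > 0`. -/
theorem cubic_bifurcation_at_most_two_zeros
    (α₁ β₁ γ₁ α₂ β₂ γ₂ : ℝ) (hα₁ : α₁ ≠ 0)
    (hne : (α₁ * γ₂ - γ₁ * β₂, β₁ * β₂ + γ₁ * α₂, β₁ * α₂) ≠ ((0 : ℝ), (0 : ℝ), (0 : ℝ))) :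
    {p : ℝ × ℝ | 0 < p.1 ∧
        p.1 * (α₁ * p.1 ^ 2 + β₁ * p.2 + γ₁ * p.2 ^ 2) = 0 ∧
        α₂ * p.1 ^ 2 + β₂ * p.1 ^ 2 * p.2 + γ₂ * p.2 ^ 3 = 0}.encard ≤ 2 := by
  set S := {p : ℝ × ℝ | 0 < p.1 ∧
        p.1 * (α₁ * p.1 ^ 2 + β₁ * p.2 + γ₁ * p.2 ^ 2) = 0 ∧
        α₂ * p.1 ^ 2 + β₂ * p.1 ^ 2 * p.2 + γ₂ * p.2 ^ 3 = 0}
  have hfirst : ∀ p ∈ S, α₁ * p.1 ^ 2 + β₁ * p.2 + γ₁ * p.2 ^ 2 = 0 := fun p ⟨hr, h₁, _⟩ =>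
    (mul_eq_zero.1 h₁).resolve_left hr.ne'
  have hinj : S.InjOn Prod.snd := by
    refine (injOn_snd_of_mul_sq_eq hα₁ fun w => -(β₁ * w + γ₁ * w ^ 2)).mono fun p hp => ?_
    exact ⟨hp.1, by linear_combination hfirst p hp⟩
  have hroots : Prod.snd '' S ⊆ {w | (α₁ * γ₂ - γ₁ * β₂) * w ^ 2 + -(β₁ * β₂ + γ₁ * α₂) * w
      + -(β₁ * α₂) = 0} := by
    rintro _ ⟨⟨r, w⟩, hp, rfl⟩
    have hw : w ≠ 0 := by
      rintro rfl
      simpa [hα₁, hp.1.ne'] using hfirst _ hp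
    have := mul_quadratic_eq_zero_of_bifurcation_eq_zero (hfirst _ hp) hp.2.2
    exact (mul_eq_zero.1 this).resolve_left hw
  have hne' : (α₁ * γ₂ - γ₁ * β₂, -(β₁ * β₂ + γ₁ * α₂), -(β₁ * α₂)) ≠ (0, 0, 0) := by
    simpa only [ne_eq, Prod.mk.injEq, neg_eq_zero] using hne
  calc S.encard = (Prod.snd '' S).encard := hinj.encard_image.symm
    _ ≤ _ := Set.encard_le_encard hroots
    _ ≤ 2 := Set.encard_setOf_quadratic_eq_zero_le_two hne'
end

section
/- For every m ∈ {0, 1, 2} there exist real numbers α₁, β₁, γ₁, α₂, β₂, γ₂ with α₁ ≠ 0 such that the set of pairs (r, w) ∈ ℝ² with r > 0 satisfying simultaneously r·(α₁r² + β₁w + γ₁w²) = 0 and α₂r² + β₂r²w + γ₂w³ = 0 has exactly m elements. -/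
/-!
With `α₁ = -1, β₁ = 1, γ₁ = 0` the first component forces `w = r²`, and on that parabola the
second component is `w (α₂ + β₂ w + γ₂ w²)`. Hence the zeros with `r > 0` correspond, via
`w ↦ (√w, w)`, to the positive roots of the quadratic `α₂ + β₂ w + γ₂ w²`, and the quadratics
`1`, `w - 1` and `(w - 1)(w - 2)` have `0`, `1` and `2` positive roots.
-/

open Set

namespace CubicBifurcation

def zeros (α₁ β₁ γ₁ α₂ β₂ γ₂ : ℝ) : Set (ℝ × ℝ) :=
  {p : ℝ × ℝ | 0 < p.1 ∧
    p.1 * (α₁ * p.1 ^ 2 + β₁ * p.2 + γ₁ * p.2 ^ 2) = 0 ∧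
    α₂ * p.1 ^ 2 + β₂ * p.1 ^ 2 * p.2 + γ₂ * p.2 ^ 3 = 0}

def positiveRoots (a b c : ℝ) : Set ℝ :=
  {w : ℝ | 0 < w ∧ a + b * w + c * w ^ 2 = 0}

theorem zeros_eq_image_positiveRoots (a b c : ℝ) :
    zeros (-1) 1 0 a b c = (fun w => (√w, w)) '' positiveRoots a b c := by
  ext ⟨r, w⟩
  simp only [zeros, positiveRoots, mem_ofPred_eq, mem_image, Prod.mk.injEq]
  constructor
  · rintro ⟨hr, h₁, h₂⟩
    have hw : w = r ^ 2 := by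
      have := (mul_eq_zero.mp h₁).resolve_left hr.ne'
      linarith
    subst hw
    have hr2 : r ^ 2 ≠ 0 := by positivity
    refine ⟨r ^ 2, ⟨by positivity, ?_⟩, Real.sqrt_sq hr.le, rfl⟩
    refine (mul_eq_zero.mp ?_).resolve_left hr2
    linear_combination h₂
  · rintro ⟨w, ⟨hw, hroot⟩, rfl, rfl⟩
    have hsq : √w ^ 2 = w := Real.sq_sqrt hw.le
    refine ⟨Real.sqrt_pos.mpr hw, ?_, ?_⟩
    · rw [hsq]; ring
    · rw [hsq]; linear_combination w * hroot

theorem encard_zeros_eq_encard_positiveRoots (a b c : ℝ) :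
    (zeros (-1) 1 0 a b c).encard = (positiveRoots a b c).encard := by
  rw [zeros_eq_image_positiveRoots]
  exact InjOn.encard_image fun _ _ _ _ h => congrArg Prod.snd h

theorem positiveRoots_const_one : positiveRoots 1 0 0 = ∅ := by
  ext w
  simp [positiveRoots]

theorem positiveRoots_sub_one : positiveRoots (-1) 1 0 = {1} := by
  ext w
  simp only [positiveRoots, mem_ofPred_eq, mem_singleton_iff]
  constructor
  · rintro ⟨-, h⟩
    linarith
  · rintro rfl
    norm_num

theorem positiveRoots_sub_one_mul_sub_two : positiveRoots 2 (-3) 1 = {1, 2} := by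
  ext w
  simp only [positiveRoots, mem_ofPred_eq, mem_insert_iff, mem_singleton_iff]
  constructor
  · rintro ⟨-, h⟩
    have hfac : (w - 1) * (w - 2) = 0 := by linear_combination h
    rcases mul_eq_zero.mp hfac with h | h
    · left; linarith
    · right; linarith
  · rintro (rfl | rfl) <;> norm_num

end CubicBifurcation

open CubicBifurcation in
/-- Realizability claim of Proposition 2 (ii): every `m ∈ {0, 1, 2}` is realized as
the exact number of zeros with `r > 0` of the cubic reduced bifurcation map
`G†(r,w) = (r(α₁r² + β₁w + γ₁w²), α₂r² + β₂r²w + γ₂w³)` for suitable parameters. -/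
theorem cubic_bifurcation_zero_count_realizable
    (m : ℕ) (hm : m ∈ ({0, 1, 2} : Set ℕ)) :
    ∃ α₁ β₁ γ₁ α₂ β₂ γ₂ : ℝ, α₁ ≠ 0 ∧
      ({p : ℝ × ℝ | 0 < p.1 ∧
          p.1 * (α₁ * p.1 ^ 2 + β₁ * p.2 + γ₁ * p.2 ^ 2) = 0 ∧
          α₂ * p.1 ^ 2 + β₂ * p.1 ^ 2 * p.2 + γ₂ * p.2 ^ 3 = 0}).encard = m := by
  rcases hm with rfl | rfl | rfl
  · refine ⟨-1, 1, 0, 1, 0, 0, by norm_num, ?_⟩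
    change (zeros _ _ _ _ _ _).encard = _
    rw [encard_zeros_eq_encard_positiveRoots, positiveRoots_const_one, encard_empty]
    rfl
  · refine ⟨-1, 1, 0, -1, 1, 0, by norm_num, ?_⟩
    change (zeros _ _ _ _ _ _).encard = _
    rw [encard_zeros_eq_encard_positiveRoots, positiveRoots_sub_one, encard_singleton]
    rfl
  · refine ⟨-1, 1, 0, 2, -3, 1, by norm_num, ?_⟩
    change (zeros _ _ _ _ _ _).encard = _
    rw [encard_zeros_eq_encard_positiveRoots, positiveRoots_sub_one_mul_sub_two,
      encard_pair (by norm_num)]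
    rfl
end
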